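/- Let (X,d) be a metric space, T > 0, and let v : X × (0,T) → ℝ be a function that is nondecreasing in the time variable (i.e. v(x,s) ≤ v(x,t) whenever s ≤ t). Then for every (x,t) ∈ X × (0,T), the quantity limsup_{δ→0+} sup{ (v(x,t) − v(y, t−δ))/δ : y ∈ X, d(x,y) ≤ δ } equals limsup_{δ→0+} sup{ max{v(x,t) − v(y,s), 0}/δ : (y,s) ∈ X×(0,T), max{d(x,y), |t−s|} ≤ δ }. -/

import Mathlib

/-!
Only the past time `s = t - δ` matters on the right-hand side: a competitor `(y, s)` with
`v x t ≤ v y s` is beaten by the nonnegative quotient at `y = x`, and otherwise `t - δ ≤ s`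
and monotonicity give `v y (t - δ) ≤ v y s`. Hence the two suprema agree for every small `δ`.
-/

open Set Filter Topology

section

variable {X : Type*} [PseudoMetricSpace X]

def pastSlopeSet (v : X → ℝ → ℝ) (x : X) (t δ : ℝ) : Set ℝ :=
  {r | ∃ y : X, dist x y ≤ δ ∧ r = (v x t - v y (t - δ)) / δ}

def posPartSlopeSet (T : ℝ) (v : X → ℝ → ℝ) (x : X) (t δ : ℝ) : Set ℝ :=
  {r | ∃ y : X, ∃ s : ℝ, s ∈ Ioo 0 T ∧ max (dist x y) |t - s| ≤ δ ∧
    r = max (v x t - v y s) 0 / δ}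

variable {T t δ : ℝ} {v : X → ℝ → ℝ} {x : X}

lemma exists_mem_posPartSlopeSet_ge (hδ : 0 < δ) (htδ : t - δ ∈ Ioo 0 T) :
    ∀ r ∈ pastSlopeSet v x t δ, ∃ r' ∈ posPartSlopeSet T v x t δ, r ≤ r' := by
  rintro r ⟨y, hy, rfl⟩
  have hdist : max (dist x y) |t - (t - δ)| ≤ δ := by
    rw [sub_sub_cancel, abs_of_pos hδ]
    exact max_le hy le_rfl
  refine ⟨_, ⟨y, t - δ, htδ, hdist, rfl⟩, ?_⟩
  gcongr
  exact le_max_left _ _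

lemma exists_mem_pastSlopeSet_ge (hmono : ∀ y, MonotoneOn (v y) (Ioo 0 T))
    (ht : t ∈ Ioo 0 T) (hδ : 0 < δ) (htδ : t - δ ∈ Ioo 0 T) :
    ∀ r ∈ posPartSlopeSet T v x t δ, ∃ r' ∈ pastSlopeSet v x t δ, r ≤ r' := by
  rintro r ⟨y, s, hs, hds, rfl⟩
  rcases le_or_gt (v x t - v y s) 0 with hle | hlt
  · have hx : 0 ≤ v x t - v x (t - δ) :=
      sub_nonneg.2 (hmono x htδ ht (sub_le_self t hδ.le))
    refine ⟨_, ⟨x, by simp [hδ.le], rfl⟩, ?_⟩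
    rw [max_eq_right hle, zero_div]
    exact div_nonneg hx hδ.le
  · have hst : t - δ ≤ s := by
      linarith [(abs_le.1 ((le_max_right _ _).trans hds)).2]
    refine ⟨_, ⟨y, (le_max_left _ _).trans hds, rfl⟩, ?_⟩
    rw [max_eq_left hlt.le]
    gcongr
    exact hmono y htδ hs hst

lemma sSup_pastSlopeSet_eq (hmono : ∀ y, MonotoneOn (v y) (Ioo 0 T))
    (ht : t ∈ Ioo 0 T) (hδ : δ ∈ Ioo 0 t) :
    sSup (pastSlopeSet v x t δ) = sSup (posPartSlopeSet T v x t δ) := by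
  have htδ : t - δ ∈ Ioo 0 T := ⟨by linarith [hδ.2], by linarith [hδ.1, ht.2]⟩
  exact csSup_eq_csSup_of_forall_exists_le (exists_mem_posPartSlopeSet_ge hδ.1 htδ)
    (exists_mem_pastSlopeSet_ge hmono ht hδ.1 htδ)

end

theorem stmt_1_general {X : Type*} [MetricSpace X] (T : ℝ) (v : X → ℝ → ℝ)
    (hmono : ∀ x : X, ∀ s ∈ Set.Ioo 0 T, ∀ t ∈ Set.Ioo 0 T, s ≤ t → v x s ≤ v x t)
    (x : X) (t : ℝ) (ht : t ∈ Set.Ioo 0 T) :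
    Filter.limsup (fun δ : ℝ =>
        sSup {r : ℝ | ∃ y : X, dist x y ≤ δ ∧ r = (v x t - v y (t - δ)) / δ}) (𝓝[>] (0:ℝ))
      =
    Filter.limsup (fun δ : ℝ =>
        sSup {r : ℝ | ∃ y : X, ∃ s : ℝ, s ∈ Set.Ioo 0 T ∧
          max (dist x y) |t - s| ≤ δ ∧ r = max (v x t - v y s) 0 / δ}) (𝓝[>] (0:ℝ)) := by
  refine limsup_congr ?_
  filter_upwards [Ioo_mem_nhdsGT ht.1] with δ hδ
  exact sSup_pastSlopeSet_eq hmono ht hδ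

/-- for v nondecreasing in time, the past-time subslope equals the
two-sided positive-part variant. -/
theorem stmt_1 {X : Type*} [MetricSpace X] (T : ℝ) (hT : 0 < T) (v : X → ℝ → ℝ)
    (hmono : ∀ x : X, ∀ s ∈ Set.Ioo 0 T, ∀ t ∈ Set.Ioo 0 T, s ≤ t → v x s ≤ v x t)
    (x : X) (t : ℝ) (ht : t ∈ Set.Ioo 0 T) :
    Filter.limsup (fun δ : ℝ =>
        sSup {r : ℝ | ∃ y : X, dist x y ≤ δ ∧ r = (v x t - v y (t - δ)) / δ}) (𝓝[>] (0:ℝ))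
      =
    Filter.limsup (fun δ : ℝ =>
        sSup {r : ℝ | ∃ y : X, ∃ s : ℝ, s ∈ Set.Ioo 0 T ∧
          max (dist x y) |t - s| ≤ δ ∧ r = max (v x t - v y s) 0 / δ}) (𝓝[>] (0:ℝ)) :=
  stmt_1_general T v hmono x t ht
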